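/- arXiv:2501.12896 — 7 statements merged into one kernel-verified Lean document; each statement's English description precedes it below -/
import Mathlib

section
/- Let π̄ be an irrational real number. Then the image of the map θ ↦ exp(iθ) + exp(i·π̄·θ) (for θ ranging over ℝ) is dense in the closed disk {z ∈ ℂ : |z| ≤ 2}. In particular, for every complex number z with |z| ≤ 2 and every ε > 0 there exists θ ∈ ℝ with |z − (exp(iθ) + exp(i·π̄·θ))| < ε. -/
/-!
Every `z` with `‖z‖ ≤ 2` is a sum `exp (α i) + exp (β i)` of two unit vectors. Replacing `θ = α`
by `θ = α + 2πm` leaves the first summand of `exp (θ i) + exp (π̄ θ i)` unchanged and turns the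
phase of the second by `2π π̄ m`; modulo `2π` these turns are dense because `π̄` is irrational,
so the second summand comes arbitrarily close to `exp (β i)`.
-/

open Complex Set

theorem exp_add_mul_I_add_exp_sub_mul_I (φ δ : ℂ) :
    exp ((φ + δ) * I) + exp ((φ - δ) * I) = 2 * cos δ * exp (φ * I) := by
  rw [Complex.cos, add_mul, sub_mul, neg_mul, exp_add, exp_sub, exp_neg]
  ring

theorem exists_exp_mul_I_add_exp_mul_I_eq {z : ℂ} (hz : ‖z‖ ≤ 2) :
    ∃ α β : ℝ, exp (α * I) + exp (β * I) = z := by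
  have hcos : Real.cos (Real.arccos (‖z‖ / 2)) = ‖z‖ / 2 :=
    Real.cos_arccos (by linarith [norm_nonneg z]) (by linarith)
  refine ⟨arg z + Real.arccos (‖z‖ / 2), arg z - Real.arccos (‖z‖ / 2), ?_⟩
  push_cast
  rw [exp_add_mul_I_add_exp_sub_mul_I, ← ofReal_cos, hcos]
  push_cast
  rw [mul_div_cancel₀ _ two_ne_zero, norm_mul_exp_arg_mul_I]

theorem exp_mul_I_add_exp_mul_I_mem_closure_range {p : ℝ} (hp : Irrational p) (α β : ℝ) :
    exp (α * I) + exp (β * I) ∈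
      closure (range fun θ : ℝ => exp (θ * I) + exp (p * θ * I)) := by
  set S : AddSubgroup ℝ := AddSubgroup.closure {2 * Real.pi * p, 2 * Real.pi}
  have hS : Dense (S : Set ℝ) := by
    rwa [dense_addSubgroupClosure_pair_iff, mul_div_cancel_left₀ _ Real.two_pi_pos.ne']
  set g : ℝ → ℂ := fun s => exp (α * I) + exp ((p * α + s : ℝ) * I)
  have hg : Continuous g := by fun_prop
  have hgS : g '' S ⊆ range fun θ : ℝ => exp (θ * I) + exp (p * θ * I) := by
    rintro _ ⟨s, hs, rfl⟩
    obtain ⟨m, n, rfl⟩ := AddSubgroup.mem_closure_pair.1 hs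
    refine ⟨α + m * (2 * Real.pi), ?_⟩
    simp only [g]
    congr 1
    · convert exp_mul_I_periodic.int_mul m (α : ℂ) using 2
      push_cast; ring
    · convert (exp_mul_I_periodic.int_mul n ((p * (α + m * (2 * Real.pi)) : ℝ) : ℂ)).symm using 2
      · push_cast; ring
      · simp only [zsmul_eq_mul]; push_cast; ring
  have hclosure := image_closure_subset_closure_image hg ⟨β - p * α, hS _, rfl⟩
  simpa [g] using closure_mono hgS hclosure

theorem pi_quant_dense_image (pibar : ℝ) (h : Irrational pibar) :
    Metric.closedBall (0 : ℂ) 2 ⊆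
      closure (Set.range fun θ : ℝ =>
        Complex.exp (θ * Complex.I) + Complex.exp (pibar * θ * Complex.I)) := by
  intro z hz
  obtain ⟨α, β, rfl⟩ := exists_exp_mul_I_add_exp_mul_I_eq (mem_closedBall_zero_iff.1 hz)
  exact exp_mul_I_add_exp_mul_I_mem_closure_range h α β
end

section
/- Let π̄, T be real numbers with π̄ ≠ 1. Suppose that for all θ ∈ ℝ both cos θ + cos(π̄·θ) = cos(θ + T) + cos(π̄·(θ + T)) and sin θ + sin(π̄·θ) = sin(θ + T) + sin(π̄·(θ + T)). Then for all θ ∈ ℝ one has sin(π̄·θ) = sin(π̄·(θ + T)), cos(π̄·θ) = cos(π̄·(θ + T)), sin θ = sin(θ + T), and cos θ = cos(θ + T). -/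
/-!
Differentiating `cos θ + cos (π̄ θ)` gives `-(sin θ + π̄ sin (π̄ θ))`, and the derivative of a
`T`-periodic function is `T`-periodic. So `sin θ + sin (π̄ θ)` and `sin θ + π̄ sin (π̄ θ)` are both
`T`-periodic, and since `π̄ ≠ 1` this linear system separates the two sine terms; the cosines are
handled in the same way starting from the sine sum.
-/

open Real

theorem Function.Periodic.deriv {𝕜 F : Type*} [NontriviallyNormedField 𝕜] [NormedAddCommGroup F]
    [NormedSpace 𝕜 F] {f : 𝕜 → F} {c : 𝕜} (hf : Function.Periodic f c) :
    Function.Periodic (deriv f) c := fun x => by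
  rw [← deriv_comp_add_const, hf.funext]

theorem eq_of_add_eq_add_of_add_mul_eq_add_mul {K : Type*} [Field K] {a x y x' y' : K}
    (ha : a ≠ 1) (h : x + y = x' + y') (ha_mul : x + a * y = x' + a * y') : y = y' := by
  have hprod : (a - 1) * (y - y') = 0 := by linear_combination ha_mul - h
  exact sub_eq_zero.mp ((mul_eq_zero.mp hprod).resolve_left (sub_ne_zero.mpr ha))

theorem deriv_cos_add_cos_const_mul (a : ℝ) :
    deriv (fun θ => cos θ + cos (a * θ)) = fun θ => -(sin θ + a * sin (a * θ)) := by
  funext θ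
  have hd : HasDerivAt (fun θ => cos θ + cos (a * θ)) (-sin θ + -sin (a * θ) * (a * 1)) θ :=
    (hasDerivAt_cos θ).add ((hasDerivAt_id θ).const_mul a).cos
  rw [hd.deriv]
  ring

theorem deriv_sin_add_sin_const_mul (a : ℝ) :
    deriv (fun θ => sin θ + sin (a * θ)) = fun θ => cos θ + a * cos (a * θ) := by
  funext θ
  have hd : HasDerivAt (fun θ => sin θ + sin (a * θ)) (cos θ + cos (a * θ) * (a * 1)) θ :=
    (hasDerivAt_sin θ).add ((hasDerivAt_id θ).const_mul a).sin
  rw [hd.deriv]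
  ring

theorem pi_quant_period_split (pibar T : ℝ) (hpi : pibar ≠ 1)
    (h : ∀ θ : ℝ,
      Real.cos θ + Real.cos (pibar * θ) =
        Real.cos (θ + T) + Real.cos (pibar * (θ + T)) ∧
      Real.sin θ + Real.sin (pibar * θ) =
        Real.sin (θ + T) + Real.sin (pibar * (θ + T))) :
    ∀ θ : ℝ,
      Real.sin (pibar * θ) = Real.sin (pibar * (θ + T)) ∧
      Real.cos (pibar * θ) = Real.cos (pibar * (θ + T)) ∧
      Real.sin θ = Real.sin (θ + T) ∧
      Real.cos θ = Real.cos (θ + T) := by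
  have hcos : Function.Periodic (fun θ => cos θ + cos (pibar * θ)) T := fun θ => (h θ).1.symm
  have hsin : Function.Periodic (fun θ => sin θ + sin (pibar * θ)) T := fun θ => (h θ).2.symm
  intro θ
  have hsin_mul : sin θ + pibar * sin (pibar * θ) = sin (θ + T) + pibar * sin (pibar * (θ + T)) :=
    by simpa only [deriv_cos_add_cos_const_mul, neg_inj] using (hcos.deriv θ).symm
  have hcos_mul : cos θ + pibar * cos (pibar * θ) = cos (θ + T) + pibar * cos (pibar * (θ + T)) :=
    by simpa only [deriv_sin_add_sin_const_mul] using (hsin.deriv θ).symm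
  have hsin_pi := eq_of_add_eq_add_of_add_mul_eq_add_mul hpi (h θ).2 hsin_mul
  have hcos_pi := eq_of_add_eq_add_of_add_mul_eq_add_mul hpi (h θ).1 hcos_mul
  exact ⟨hsin_pi, hcos_pi, by linarith [(h θ).2], by linarith [(h θ).1]⟩
end

section
/- Let π̄, x, y ∈ ℝ with x > 0 and 0 < x² + y² ≤ 4. Define α = arctan(y/x) and β = arccos(√(x² + y²)/2). If θ ∈ ℝ and m, k ∈ ℤ satisfy θ = α − β + 2πm and π̄·θ = α + β + 2πk, then cos θ + cos(π̄·θ) = x and sin θ + sin(π̄·θ) = y; equivalently, x + iy = exp(iθ) + exp(i·π̄·θ). -/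
/-! With `r = √(x² + y²)`, the angle `α` is the polar angle of `(x, y)`, so `x + iy = r e^{iα}`,
and `cos β = r / 2`. Up to multiples of `2π` the two angles are `α ∓ β`, and
`e^{i(α-β)} + e^{i(α+β)} = 2 cos β · e^{iα} = r e^{iα}`. -/

open Real

theorem sqrt_one_add_div_sq {x : ℝ} (hx : 0 < x) (y : ℝ) :
    √(1 + (y / x) ^ 2) = √(x ^ 2 + y ^ 2) / x := by
  rw [eq_div_iff hx.ne', ← sqrt_sq hx.le, ← sqrt_mul (by positivity), sqrt_sq hx.le]
  congr 1
  field_simp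

theorem sqrt_sq_add_sq_mul_cos_arctan_div {x : ℝ} (hx : 0 < x) (y : ℝ) :
    √(x ^ 2 + y ^ 2) * cos (arctan (y / x)) = x := by
  have hr : 0 < √(x ^ 2 + y ^ 2) := sqrt_pos.2 (by positivity)
  rw [cos_arctan, sqrt_one_add_div_sq hx]
  field_simp

theorem sqrt_sq_add_sq_mul_sin_arctan_div {x : ℝ} (hx : 0 < x) (y : ℝ) :
    √(x ^ 2 + y ^ 2) * sin (arctan (y / x)) = y := by
  have hr : 0 < √(x ^ 2 + y ^ 2) := sqrt_pos.2 (by positivity)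
  rw [sin_arctan, sqrt_one_add_div_sq hx]
  field_simp

theorem two_mul_cos_arccos_div_two {r : ℝ} (h₀ : 0 ≤ r) (h₂ : r ≤ 2) :
    2 * cos (arccos (r / 2)) = r := by
  rw [cos_arccos] <;> linarith

theorem cos_add_cos_of_eq_sub_of_eq_add {θ φ α β : ℝ} {m k : ℤ}
    (hθ : θ = α - β + 2 * π * m) (hφ : φ = α + β + 2 * π * k) :
    cos θ + cos φ = 2 * cos β * cos α ∧ sin θ + sin φ = 2 * cos β * sin α := by
  have hθ' : θ = α - β + m * (2 * π) := by rw [hθ]; ring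
  have hφ' : φ = α + β + k * (2 * π) := by rw [hφ]; ring
  rw [hθ', hφ', cos_add_int_mul_two_pi, cos_add_int_mul_two_pi, sin_add_int_mul_two_pi,
    sin_add_int_mul_two_pi, cos_sub, cos_add, sin_sub, sin_add]
  constructor <;> ring

theorem pi_quant_geometric_forward_general (pibar x y : ℝ) (hx : 0 < x)
    (hle : x ^ 2 + y ^ 2 ≤ 4)
    (α β θ : ℝ) (hα : α = Real.arctan (y / x))
    (hβ : β = Real.arccos (Real.sqrt (x ^ 2 + y ^ 2) / 2))
    (m k : ℤ)
    (hθ : θ = α - β + 2 * Real.pi * m)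
    (hpθ : pibar * θ = α + β + 2 * Real.pi * k) :
    Real.cos θ + Real.cos (pibar * θ) = x ∧
    Real.sin θ + Real.sin (pibar * θ) = y := by
  have hr₂ : √(x ^ 2 + y ^ 2) ≤ 2 :=
    (sqrt_le_left zero_le_two).2 (by linarith)
  have hcosβ : 2 * cos β = √(x ^ 2 + y ^ 2) := by
    rw [hβ, two_mul_cos_arccos_div_two (sqrt_nonneg _) hr₂]
  obtain ⟨hcos, hsin⟩ := cos_add_cos_of_eq_sub_of_eq_add hθ hpθ
  rw [hcos, hsin, hcosβ, hα]
  exact ⟨sqrt_sq_add_sq_mul_cos_arctan_div hx y, sqrt_sq_add_sq_mul_sin_arctan_div hx y⟩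

theorem pi_quant_geometric_forward (pibar x y : ℝ) (hx : 0 < x)
    (hpos : 0 < x ^ 2 + y ^ 2) (hle : x ^ 2 + y ^ 2 ≤ 4)
    (α β θ : ℝ) (hα : α = Real.arctan (y / x))
    (hβ : β = Real.arccos (Real.sqrt (x ^ 2 + y ^ 2) / 2))
    (m k : ℤ)
    (hθ : θ = α - β + 2 * Real.pi * m)
    (hpθ : pibar * θ = α + β + 2 * Real.pi * k) :
    Real.cos θ + Real.cos (pibar * θ) = x ∧
    Real.sin θ + Real.sin (pibar * θ) = y :=
  pi_quant_geometric_forward_general pibar x y hx hle α β θ hα hβ m k hθ hpθ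
end

section
/- Let π̄, x, y ∈ ℝ with x > 0 and 0 < x² + y² < 4. Define α = arctan(y/x) and β = arccos(√(x² + y²)/2). If θ ∈ ℝ satisfies cos θ + cos(π̄·θ) = x and sin θ + sin(π̄·θ) = y, then there exist integers m, k ∈ ℤ such that either (θ = α − β + 2πm and π̄·θ = α + β + 2πk) or (θ = α + β + 2πm and π̄·θ = α − β + 2πk). -/
/-!
Put φ = π̄θ and r = √(x² + y²), so that (x, y) = r (cos α, sin α) and cos β = r / 2.
Rotating both unit vectors by -α makes their sum the real number r:
cos (θ - α) + cos (φ - α) = r and sin (θ - α) + sin (φ - α) = 0 (which also forces r ≤ 2).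
Two angles with opposite sines and a nonzero cosine sum are opposite mod 2π, so both
have cosine r / 2 = cos β, i.e. they are ±β mod 2π with opposite signs.
-/

open Real

lemma sqrt_sq_add_sq_mul_cos_and_sin_arctan_div {x : ℝ} (y : ℝ) (hx : 0 < x) :
    √(x ^ 2 + y ^ 2) * cos (arctan (y / x)) = x ∧
      √(x ^ 2 + y ^ 2) * sin (arctan (y / x)) = y := by
  have hsqrt : √(1 + (y / x) ^ 2) = √(x ^ 2 + y ^ 2) / x := by
    rw [div_pow, one_add_div (by positivity), sqrt_div' _ (sq_nonneg x), sqrt_sq hx.le,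
      add_comm]
  have hr : 0 < √(x ^ 2 + y ^ 2) := sqrt_pos.mpr (by positivity)
  rw [cos_arctan, sin_arctan, hsqrt]
  constructor <;> field_simp

section Rotation

variable {θ φ α r : ℝ}

lemma cos_sub_add_cos_sub_of_polar (hcos : cos θ + cos φ = r * cos α)
    (hsin : sin θ + sin φ = r * sin α) : cos (θ - α) + cos (φ - α) = r := by
  simp only [cos_sub]
  linear_combination cos α * hcos + sin α * hsin + r * sin_sq_add_cos_sq α

lemma sin_sub_add_sin_sub_of_polar (hcos : cos θ + cos φ = r * cos α)
    (hsin : sin θ + sin φ = r * sin α) : sin (θ - α) + sin (φ - α) = 0 := by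
  simp only [sin_sub]
  linear_combination cos α * hsin - sin α * hcos

end Rotation

lemma Real.Angle.eq_and_eq_neg_or_of_sin_add_sin_eq_zero {a b β : Real.Angle}
    (hsin : a.sin + b.sin = 0) (hcos : a.cos + b.cos = 2 * β.cos) (hβ : β.cos ≠ 0) :
    (a = β ∧ b = -β) ∨ (a = -β ∧ b = β) := by
  have hsin' : a.sin = (-b).sin := by rw [Real.Angle.sin_neg]; linear_combination hsin
  rcases Real.Angle.sin_eq_iff_eq_or_add_eq_pi.mp hsin' with hab | hab
  · have hb : b = -a := by rw [hab, neg_neg]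
    have hcosa : a.cos = β.cos := by
      rw [hb, Real.Angle.cos_neg] at hcos
      linarith
    rcases Real.Angle.cos_eq_iff_eq_or_eq_neg.mp hcosa with rfl | rfl
    · exact Or.inl ⟨rfl, hb⟩
    · exact Or.inr ⟨rfl, by rw [hb, neg_neg]⟩
  · have ha : a = b + π := by rw [← hab]; abel
    rw [ha, Real.Angle.cos_add_pi] at hcos
    exact absurd (by linarith) hβ

lemma exists_int_eq_add_two_pi_mul_of_coe_sub_eq {t α γ : ℝ}
    (h : ((t - α : ℝ) : Real.Angle) = γ) : ∃ k : ℤ, t = α + γ + 2 * π * k := by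
  obtain ⟨k, hk⟩ := Real.Angle.angle_eq_iff_two_pi_dvd_sub.mp h
  exact ⟨k, by linarith⟩

theorem pi_quant_geometric_converse_general (pibar x y : ℝ) (hx : 0 < x)
    (α β θ : ℝ) (hα : α = Real.arctan (y / x))
    (hβ : β = Real.arccos (Real.sqrt (x ^ 2 + y ^ 2) / 2))
    (hcos : Real.cos θ + Real.cos (pibar * θ) = x)
    (hsin : Real.sin θ + Real.sin (pibar * θ) = y) :
    ∃ m k : ℤ,
      (θ = α - β + 2 * Real.pi * m ∧ pibar * θ = α + β + 2 * Real.pi * k) ∨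
      (θ = α + β + 2 * Real.pi * m ∧ pibar * θ = α - β + 2 * Real.pi * k) := by
  obtain ⟨hrx, hry⟩ := sqrt_sq_add_sq_mul_cos_and_sin_arctan_div y hx
  set r := √(x ^ 2 + y ^ 2)
  rw [← hα] at hrx hry
  have hrot_cos := cos_sub_add_cos_sub_of_polar (hcos.trans hrx.symm) (hsin.trans hry.symm)
  have hrot_sin := sin_sub_add_sin_sub_of_polar (hcos.trans hrx.symm) (hsin.trans hry.symm)
  have hr : 0 < r := sqrt_pos.mpr (by positivity)
  have hr2 : r ≤ 2 := by linarith [cos_le_one (θ - α), cos_le_one (pibar * θ - α)]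
  have hcosβ : cos β = r / 2 := by rw [hβ, cos_arccos (by linarith) (by linarith)]
  rcases Real.Angle.eq_and_eq_neg_or_of_sin_add_sin_eq_zero (β := β)
      (a := ↑(θ - α)) (b := ↑(pibar * θ - α))
      (by simpa only [Real.Angle.sin_coe] using hrot_sin)
      (by simp only [Real.Angle.cos_coe]; linarith)
      (by rw [Real.Angle.cos_coe, hcosβ]; positivity) with ⟨hθ, hφ⟩ | ⟨hθ, hφ⟩
  · rw [← Real.Angle.coe_neg] at hφ
    obtain ⟨m, hm⟩ := exists_int_eq_add_two_pi_mul_of_coe_sub_eq hθ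
    obtain ⟨k, hk⟩ := exists_int_eq_add_two_pi_mul_of_coe_sub_eq hφ
    exact ⟨m, k, Or.inr ⟨hm, by linarith⟩⟩
  · rw [← Real.Angle.coe_neg] at hθ
    obtain ⟨m, hm⟩ := exists_int_eq_add_two_pi_mul_of_coe_sub_eq hθ
    obtain ⟨k, hk⟩ := exists_int_eq_add_two_pi_mul_of_coe_sub_eq hφ
    exact ⟨m, k, Or.inl ⟨by linarith, hk⟩⟩

theorem pi_quant_geometric_converse (pibar x y : ℝ) (hx : 0 < x)
    (hpos : 0 < x ^ 2 + y ^ 2) (hlt : x ^ 2 + y ^ 2 < 4)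
    (α β θ : ℝ) (hα : α = Real.arctan (y / x))
    (hβ : β = Real.arccos (Real.sqrt (x ^ 2 + y ^ 2) / 2))
    (hcos : Real.cos θ + Real.cos (pibar * θ) = x)
    (hsin : Real.sin θ + Real.sin (pibar * θ) = y) :
    ∃ m k : ℤ,
      (θ = α - β + 2 * Real.pi * m ∧ pibar * θ = α + β + 2 * Real.pi * k) ∨
      (θ = α + β + 2 * Real.pi * m ∧ pibar * θ = α - β + 2 * Real.pi * k) :=
  pi_quant_geometric_converse_general pibar x y hx α β θ hα hβ hcos hsin
end

section
/- Let π̄ ∈ ℝ with 0 ≤ π̄ ≤ 1, let θ ∈ ℝ, and let Δθ ≥ 0. Suppose that for all t ∈ [θ, θ + Δθ] one has |sin t + sin(π̄·t)| ≤ 1. Then |(cos(θ + Δθ) + cos(π̄·(θ + Δθ))) − (cos θ + cos(π̄·θ))| ≤ Δθ. -/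
/-!
The derivative of `t ↦ cos t + cos (π̄ t)` is `-(sin t + π̄ sin (π̄ t))`, and
`sin t + π̄ sin (π̄ t) = (1 - π̄) sin t + π̄ (sin t + sin (π̄ t))` is a convex combination of two
numbers of absolute value at most `1`. The mean value inequality then bounds the increment over
`[θ, θ + Δθ]` by `Δθ`.
-/

open Real Set

lemma abs_add_mul_le_one {a b c : ℝ} (hc₀ : 0 ≤ c) (hc₁ : c ≤ 1)
    (ha : |a| ≤ 1) (hab : |a + b| ≤ 1) : |a + c * b| ≤ 1 :=
  calc |a + c * b| = |(1 - c) * a + c * (a + b)| := by ring_nf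
    _ ≤ |(1 - c) * a| + |c * (a + b)| := abs_add_le _ _
    _ = (1 - c) * |a| + c * |a + b| := by
      rw [abs_mul, abs_mul, abs_of_nonneg (sub_nonneg.mpr hc₁), abs_of_nonneg hc₀]
    _ ≤ (1 - c) * 1 + c * 1 := by gcongr
    _ = 1 := by ring

lemma hasDerivAt_cos_add_cos_mul (c t : ℝ) :
    HasDerivAt (fun t => cos t + cos (c * t)) (-(sin t + c * sin (c * t))) t := by
  have hcos_mul : HasDerivAt (fun t => cos (c * t)) (-sin (c * t) * c) t :=
    (hasDerivAt_cos (c * t)).comp t ((hasDerivAt_id t).const_mul c |>.congr_deriv (mul_one c))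
  exact ((hasDerivAt_cos t).add hcos_mul).congr_deriv (by ring)

theorem pi_quant_error_real (pibar : ℝ) (h0 : 0 ≤ pibar) (h1 : pibar ≤ 1)
    (θ Δθ : ℝ) (hΔ : 0 ≤ Δθ)
    (hy : ∀ t ∈ Set.Icc θ (θ + Δθ), |Real.sin t + Real.sin (pibar * t)| ≤ 1) :
    |(Real.cos (θ + Δθ) + Real.cos (pibar * (θ + Δθ))) -
      (Real.cos θ + Real.cos (pibar * θ))| ≤ Δθ := by
  have hderiv : ∀ t ∈ Icc θ (θ + Δθ), HasDerivWithinAt (fun t => cos t + cos (pibar * t))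
      (-(sin t + pibar * sin (pibar * t))) (Icc θ (θ + Δθ)) t :=
    fun t _ => (hasDerivAt_cos_add_cos_mul pibar t).hasDerivWithinAt
  have hbound : ∀ t ∈ Ico θ (θ + Δθ), ‖-(sin t + pibar * sin (pibar * t))‖ ≤ 1 :=
    fun t ht => by
      rw [norm_neg, Real.norm_eq_abs]
      exact abs_add_mul_le_one h0 h1 (abs_sin_le_one t) (hy t (Ico_subset_Icc_self ht))
  simpa using norm_image_sub_le_of_norm_deriv_le_segment' hderiv hbound (θ + Δθ)
    (right_mem_Icc.mpr (le_add_of_nonneg_right hΔ))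
end

section
/- Let π̄ ∈ ℝ with 0 ≤ π̄ ≤ 1, let θ ∈ ℝ, and let Δθ ≥ 0. Suppose that for all t ∈ [θ, θ + Δθ] one has |cos t + cos(π̄·t)| ≤ 1. Then |(sin(θ + Δθ) + sin(π̄·(θ + Δθ))) − (sin θ + sin(π̄·θ))| ≤ Δθ. -/
open Real Set

/-- `u + a v = (1 - a) u + a (u + v)` is a convex combination of two points of `[-C, C]`. -/
lemma abs_add_mul_le {u v a C : ℝ} (ha₀ : 0 ≤ a) (ha₁ : a ≤ 1)
    (hu : |u| ≤ C) (huv : |u + v| ≤ C) : |u + a * v| ≤ C := by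
  rw [abs_le] at hu huv ⊢
  constructor <;> nlinarith

lemma hasDerivAt_sin_add_sin_mul (a t : ℝ) :
    HasDerivAt (fun t => sin t + sin (a * t)) (cos t + a * cos (a * t)) t := by
  have hmul := ((hasDerivAt_id' t).const_mul a).sin
  exact ((Real.hasDerivAt_sin t).fun_add hmul).congr_deriv (by ring)

theorem pi_quant_error_imag (pibar : ℝ) (h0 : 0 ≤ pibar) (h1 : pibar ≤ 1)
    (θ Δθ : ℝ) (hΔ : 0 ≤ Δθ)
    (hx : ∀ t ∈ Set.Icc θ (θ + Δθ), |Real.cos t + Real.cos (pibar * t)| ≤ 1) :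
    |(Real.sin (θ + Δθ) + Real.sin (pibar * (θ + Δθ))) -
      (Real.sin θ + Real.sin (pibar * θ))| ≤ Δθ := by
  have hderiv : ∀ t ∈ Icc θ (θ + Δθ), HasDerivWithinAt (fun t => sin t + sin (pibar * t))
      (cos t + pibar * cos (pibar * t)) (Icc θ (θ + Δθ)) t :=
    fun t _ => (hasDerivAt_sin_add_sin_mul pibar t).hasDerivWithinAt
  have hbound : ∀ t ∈ Ico θ (θ + Δθ), ‖cos t + pibar * cos (pibar * t)‖ ≤ 1 :=
    fun t ht => abs_add_mul_le h0 h1 (abs_cos_le_one t) (hx t (Ico_subset_Icc_self ht))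
  have hmvt := norm_image_sub_le_of_norm_deriv_le_segment' hderiv hbound (θ + Δθ)
    (right_mem_Icc.2 (le_add_of_nonneg_right hΔ))
  simpa only [Real.norm_eq_abs, one_mul, add_sub_cancel_left] using hmvt
end

section
/- Let λ be a natural number, let π̄ > 0 be a real number, and set M = 2π·10^{λ}. Then (1/M)·∫₀^M |sin θ + π̄·sin(π̄·θ)| dθ ≤ 2(1 + π̄)/π + 2/M. -/
/-!
Bound the integrand by `|sin θ| + π̄ |sin (π̄ θ)|`. Over `[0, M]`, an integer number of half
periods, `|sin|` integrates to exactly `2M/π`; the substitution `u = π̄ θ` turns the second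
integral into `∫₀^{π̄M} |sin|`, which is at most `2π̄M/π + 2` after rounding `π̄M` up to a
multiple of `π`.
-/

open Real intervalIntegral MeasureTheory

theorem intervalIntegral.integral_abs_add_le {f g : ℝ → ℝ} {μ : Measure ℝ} {a b : ℝ}
    (hab : a ≤ b) (hf : IntervalIntegrable f μ a b) (hg : IntervalIntegrable g μ a b) :
    ∫ x in a..b, |f x + g x| ∂μ ≤ (∫ x in a..b, |f x| ∂μ) + ∫ x in a..b, |g x| ∂μ := by
  rw [← integral_add hf.abs hg.abs]
  exact integral_mono_on hab (hf.add hg).abs (hf.abs.add hg.abs) fun x _ => abs_add_le _ _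

theorem integral_abs_sin_natCast_mul_pi (n : ℕ) : ∫ x in (0 : ℝ)..n * π, |sin x| = 2 * n := by
  have h_period : Function.Periodic (fun x => |sin x|) π := fun x => by simp [sin_add_pi]
  have h_half : ∫ x in (0 : ℝ)..π, |sin x| = 2 := by
    rw [integral_congr (g := sin) fun x hx => by
      rw [Set.uIcc_of_le pi_pos.le] at hx
      exact abs_of_nonneg (sin_nonneg_of_nonneg_of_le_pi hx.1 hx.2)]
    norm_num [integral_sin]
  have h := h_period.intervalIntegral_add_zsmul_eq (n : ℤ) 0
    fun a b => continuous_sin.abs.intervalIntegrable a b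
  simp only [zero_add, zsmul_eq_mul, Int.cast_natCast] at h
  rw [h, h_half, mul_comm]

theorem integral_abs_sin_le {T : ℝ} (hT : 0 ≤ T) :
    ∫ x in (0 : ℝ)..T, |sin x| ≤ 2 * T / π + 2 := by
  set n : ℕ := ⌊T / π⌋₊ + 1
  have hn_le : (n : ℝ) ≤ T / π + 1 := by
    push_cast [n]
    linarith [Nat.floor_le (div_nonneg hT pi_pos.le)]
  have hT_le : T ≤ n * π := by
    rw [← div_le_iff₀ pi_pos]
    exact_mod_cast (Nat.lt_floor_add_one (T / π)).le
  calc ∫ x in (0 : ℝ)..T, |sin x|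
      ≤ ∫ x in (0 : ℝ)..n * π, |sin x| :=
        integral_mono_interval le_rfl hT hT_le (.of_forall fun _ => abs_nonneg _)
          (continuous_sin.abs.intervalIntegrable _ _)
    _ = 2 * n := integral_abs_sin_natCast_mul_pi n
    _ ≤ 2 * T / π + 2 := by rw [mul_div_assoc]; linarith

theorem integral_abs_mul_sin_mul {c : ℝ} (hc : 0 ≤ c) (a b : ℝ) :
    ∫ x in a..b, |c * sin (c * x)| = ∫ x in c * a..c * b, |sin x| := by
  simp_rw [abs_mul, abs_of_nonneg hc, intervalIntegral.integral_const_mul]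
  exact mul_integral_comp_mul_left (f := fun x => |sin x|) c

theorem pi_quant_average_error (lam : ℕ) (pibar : ℝ) (hpibar : 0 < pibar)
    (M : ℝ) (hM : M = 2 * Real.pi * 10 ^ lam) :
    (1 / M) * ∫ θ in (0 : ℝ)..M, |Real.sin θ + pibar * Real.sin (pibar * θ)| ≤
      2 * (1 + pibar) / Real.pi + 2 / M := by
  have hM_pos : 0 < M := by rw [hM]; positivity
  have h_sin : ∫ θ in (0 : ℝ)..M, |sin θ| = 2 * M / π := by
    rw [show M = ((2 * 10 ^ lam : ℕ) : ℝ) * π by rw [hM]; push_cast; ring,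
      integral_abs_sin_natCast_mul_pi]
    field_simp
  have h_sin_mul : ∫ θ in (0 : ℝ)..M, |pibar * sin (pibar * θ)| ≤ 2 * (pibar * M) / π + 2 := by
    rw [integral_abs_mul_sin_mul hpibar.le, mul_zero]
    exact integral_abs_sin_le (by positivity)
  have h_triangle := integral_abs_add_le (μ := volume) hM_pos.le
    (continuous_sin.intervalIntegrable 0 M)
    ((by fun_prop : Continuous fun θ => pibar * sin (pibar * θ)).intervalIntegrable 0 M)
  rw [one_div, inv_mul_le_iff₀ hM_pos, mul_add, mul_div_cancel₀ _ hM_pos.ne']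
  calc _ ≤ 2 * M / π + (2 * (pibar * M) / π + 2) := h_sin ▸ h_triangle.trans (by gcongr)
    _ = M * (2 * (1 + pibar) / π) + 2 := by ring
end
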